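/- For the minimum-error discrimination of BPSK coherent states, the cross-over probability ε = [1 − √(1 − e^{−4N_S})]/2 satisfies: the capacity C₁ = ln 2 − h₂(ε) of the induced binary symmetric channel obeys C₁/N_S → 2 as N_S → 0⁺ (in nats). -/

import Mathlib

/-!
With `s = √(1 - e^{-4N})` the cross-over probability is `ε = (1 - s)/2`, so
`(ε - 1/2)² = (1 - e^{-4N})/4 ~ N`. On the other hand `ln 2 - h₂` has a double zero at `1/2`
with second derivative `4`, so `ln 2 - h₂(ε) ~ 2 (ε - 1/2)² ~ 2N`.
-/

open Filter

noncomputable def h₂ (x : ℝ) : ℝ := -x * Real.log x - (1 - x) * Real.log (1 - x)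

open Real Topology

lemma h₂_eq_binEntropy : h₂ = binEntropy := by
  ext p
  simp only [h₂, binEntropy, log_inv]
  ring

lemma hasDerivAt_log_sub_log_one_sub {p : ℝ} (hp₀ : p ≠ 0) (hp₁ : p ≠ 1) :
    HasDerivAt (fun q => log q - log (1 - q)) (p⁻¹ + (1 - p)⁻¹) p :=
  ((hasDerivAt_log hp₀).sub (((hasDerivAt_id' p).const_sub 1).log
    (sub_ne_zero.2 hp₁.symm))).congr_deriv (by field_simp; ring)

/- After L'Hôpital the ratio is half the slope at `1/2` of `log p - log (1 - p) = -binEntropy' p`,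
whose derivative there is `1/p + 1/(1-p) = 4`. -/
lemma tendsto_log_two_sub_binEntropy_div_sq :
    Tendsto (fun p => (log 2 - binEntropy p) / (p - 2⁻¹) ^ 2) (𝓝[≠] 2⁻¹) (𝓝 2) := by
  have hne : ∀ᶠ p in 𝓝[≠] (2⁻¹ : ℝ), p ≠ 0 ∧ p ≠ 1 :=
    ((eventually_ne_nhds (by norm_num)).and (eventually_ne_nhds (by norm_num))).filter_mono
      nhdsWithin_le_nhds
  have hslope : Tendsto (fun p => (log p - log (1 - p)) / (p - 2⁻¹)) (𝓝[≠] (2⁻¹ : ℝ)) (𝓝 4) := by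
    have h : HasDerivAt (fun q => log q - log (1 - q)) 4 2⁻¹ :=
      (hasDerivAt_log_sub_log_one_sub (by norm_num) (by norm_num)).congr_deriv (by norm_num)
    refine h.tendsto_slope.congr' (Eventually.of_forall fun p => ?_)
    norm_num [slope, div_eq_inv_mul]
  refine HasDerivAt.lhopital_zero_nhdsNE (f' := fun p => log p - log (1 - p))
    (g' := fun p => 2 * (p - 2⁻¹)) ?_ ?_ ?_ ?_ ?_ ?_
  · filter_upwards [hne] with p ⟨hp₀, hp₁⟩
    exact ((hasDerivAt_binEntropy hp₀ hp₁).const_sub (log 2)).congr_deriv (by ring)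
  · exact Eventually.of_forall fun p =>
      (((hasDerivAt_id' p).sub_const 2⁻¹).fun_pow 2).congr_deriv (by simp)
  · filter_upwards [self_mem_nhdsWithin] with p hp
    exact mul_ne_zero two_ne_zero (sub_ne_zero.2 hp)
  · have h : Tendsto (fun p => log 2 - binEntropy p) (𝓝 2⁻¹) (𝓝 (log 2 - binEntropy 2⁻¹)) :=
      (continuous_const.sub binEntropy_continuous).tendsto _
    simpa using h.mono_left nhdsWithin_le_nhds
  · have h : Tendsto (fun p : ℝ => (p - 2⁻¹) ^ 2) (𝓝 2⁻¹) (𝓝 ((2⁻¹ - 2⁻¹) ^ 2)) :=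
      ((continuous_id.sub continuous_const).pow 2).tendsto _
    simpa using h.mono_left nhdsWithin_le_nhds
  · convert hslope.div_const 2 using 1
    · ext p
      rw [div_div, mul_comm]
    · norm_num

lemma tendsto_one_sub_exp_neg_mul_div (c : ℝ) :
    Tendsto (fun x => (1 - exp (-c * x)) / x) (𝓝[≠] 0) (𝓝 c) := by
  have h : HasDerivAt (fun x => 1 - exp (-c * x)) c 0 :=
    ((((hasDerivAt_id' (0 : ℝ)).const_mul (-c)).exp).const_sub 1).congr_deriv (by simp)
  refine h.tendsto_slope.congr' (Eventually.of_forall fun x => ?_)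
  simp [slope, div_eq_inv_mul]

noncomputable def bpskCrossover (N : ℝ) : ℝ := (1 - √(1 - exp (-4 * N))) / 2

lemma bpskCrossover_sub_two_inv_sq {N : ℝ} (hN : 0 ≤ N) :
    (bpskCrossover N - 2⁻¹) ^ 2 = (1 - exp (-4 * N)) / 4 := by
  have h : 0 ≤ 1 - exp (-4 * N) := by
    rw [sub_nonneg, exp_le_one_iff]
    linarith
  rw [bpskCrossover]
  linear_combination sq_sqrt h / 4

lemma bpskCrossover_lt_two_inv {N : ℝ} (hN : 0 < N) : bpskCrossover N < 2⁻¹ := by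
  have h : 0 < 1 - exp (-4 * N) := by
    rw [sub_pos, exp_lt_one_iff]
    linarith
  have := sqrt_pos.2 h
  rw [bpskCrossover]
  linarith

lemma tendsto_bpskCrossover : Tendsto bpskCrossover (𝓝[>] 0) (𝓝[≠] 2⁻¹) := by
  refine tendsto_nhdsWithin_of_tendsto_nhds_of_eventually_within _ ?_ ?_
  · have h : Continuous bpskCrossover := by unfold bpskCrossover; fun_prop
    simpa [bpskCrossover] using (h.tendsto 0).mono_left nhdsWithin_le_nhds
  · filter_upwards [self_mem_nhdsWithin] with N (hN : 0 < N)
    exact (bpskCrossover_lt_two_inv hN).ne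

/-- For minimum-error discrimination of BPSK coherent states with cross-over
probability `ε(N_S) = (1 − √(1 − e^{−4N_S}))/2`, the induced binary symmetric
channel capacity `C₁ = ln 2 − h₂(ε)` (in nats) satisfies `C₁/N_S → 2`
as `N_S → 0⁺`. -/
theorem bpsk_dolinar_capacity_limit :
    Tendsto (fun N : ℝ =>
        (Real.log 2 - h₂ ((1 - Real.sqrt (1 - Real.exp (-4 * N))) / 2)) / N)
      (nhdsWithin 0 (Set.Ioi 0)) (nhds 2) := by
  rw [h₂_eq_binEntropy]
  change Tendsto (fun N => (log 2 - binEntropy (bpskCrossover N)) / N) (𝓝[>] 0) (𝓝 2)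
  have h := ((tendsto_log_two_sub_binEntropy_div_sq.comp tendsto_bpskCrossover).mul
    ((tendsto_one_sub_exp_neg_mul_div 4).mono_left (nhdsGT_le_nhdsNE 0))).div_const 4
  refine (h.congr' ?_).trans (by norm_num)
  filter_upwards [self_mem_nhdsWithin] with N (hN : 0 < N)
  have hε : (bpskCrossover N - 2⁻¹) ^ 2 ≠ 0 :=
    pow_ne_zero 2 (sub_ne_zero.2 (bpskCrossover_lt_two_inv hN).ne)
  have hexp : 1 - exp (-4 * N) = 4 * (bpskCrossover N - 2⁻¹) ^ 2 := by
    rw [bpskCrossover_sub_two_inv_sq hN.le]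
    ring
  rw [Function.comp_apply, hexp]
  generalize (bpskCrossover N - 2⁻¹) ^ 2 = b at hε
  field_simp
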